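/- For a metric space (X,d), the completion of (X,d) is Bourbaki-complete if and only if every Bourbaki-bounded subset of X is totally bounded. -/

import Mathlib

/-!
Write `Ŷ` for the completion, into which `X` embeds isometrically with dense range.

If Bourbaki-bounded subsets of `X` are totally bounded: a Bourbaki-Cauchy sequence of `Ŷ` is
shadowed by a sequence of `X` at distances tending to `0`. A chain in `Ŷ` is shadowed by a chain
in `X` whose links are longer by at most twice the shadowing distance, so the shadow sequence is
Bourbaki-Cauchy in `X`. Its range is Bourbaki-bounded, hence totally bounded, hence relatively
compact in `Ŷ`; this gives a cluster point, which is also one of the original sequence.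

Conversely, every sequence in a Bourbaki-bounded set has a Bourbaki-Cauchy subsequence: along an
ultrafilter a single chain-ball of each radius `1 / (k + 1)` captures the sequence, and a diagonal
extraction follows these chain-balls. If a Bourbaki-bounded set were not totally bounded, such a
subsequence of a uniformly separated sequence would be Bourbaki-Cauchy in `Ŷ` without a cluster
point.
-/

open Metric Filter Set

/-- Iterated chain-ball: `chainBall x eps m` is the set of points joinable to `x`
by a chain of `m + 1` steps each of length `< eps`; `chainBall x eps 0` is the open
ball (corresponding to `B^1`), and `chainBall x eps m` corresponds to `B^(m+1)`. -/
def chainBall {X : Type*} [PseudoMetricSpace X] (x : X) (eps : Real) : Nat -> Set X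
  | 0 => Metric.ball x eps
  | m + 1 => Set.iUnion fun y : X => Set.iUnion fun _ : y ∈ chainBall x eps m => Metric.ball y eps

/-- `B` is Bourbaki-bounded in `X`. -/
def IsBourbakiBounded {X : Type*} [PseudoMetricSpace X] (B : Set X) : Prop :=
  ∀ ε > (0 : ℝ), ∃ m : ℕ, ∃ s : Finset X, B ⊆ ⋃ x ∈ s, chainBall x ε m

/-- A sequence is Bourbaki-Cauchy in `X`. -/
def BourbakiCauchySeq {X : Type*} [PseudoMetricSpace X] (u : ℕ → X) : Prop :=
  ∀ ε > (0 : ℝ), ∃ m n₀ : ℕ, ∃ p : X, ∀ n ≥ n₀, u n ∈ chainBall p ε m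

/-- A metric space is (sequentially) Bourbaki-complete if every Bourbaki-Cauchy
sequence has a cluster point. -/
def IsBourbakiComplete (X : Type*) [PseudoMetricSpace X] : Prop :=
  ∀ u : ℕ → X, BourbakiCauchySeq u → ∃ x : X, MapClusterPt x atTop u

open Topology

section BourbakiCompleteness

variable {X Y : Type*} [PseudoMetricSpace X] [PseudoMetricSpace Y]

theorem chainBall_mono_radius {x : X} {ε ε' : ℝ} (h : ε ≤ ε') :
    ∀ m, chainBall x ε m ⊆ chainBall x ε' m
  | 0 => ball_subset_ball h
  | m + 1 => iUnion₂_mono' fun y hy => ⟨y, chainBall_mono_radius h m hy, ball_subset_ball h⟩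

theorem mem_chainBall_self {x : X} {ε : ℝ} (hε : 0 < ε) : ∀ m, x ∈ chainBall x ε m
  | 0 => mem_ball_self hε
  | m + 1 => mem_iUnion₂.2 ⟨x, mem_chainBall_self hε m, mem_ball_self hε⟩

theorem LipschitzWith.mapsTo_chainBall {f : X → Y} (hf : LipschitzWith 1 f) (x : X) (ε : ℝ) :
    ∀ m, MapsTo f (chainBall x ε m) (chainBall (f x) ε m)
  | 0 => by simpa [chainBall] using hf.mapsTo_ball one_ne_zero x ε
  | m + 1 => fun y hy => by
    obtain ⟨z, hz, hyz⟩ := mem_iUnion₂.1 hy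
    refine mem_iUnion₂.2 ⟨f z, hf.mapsTo_chainBall x ε m hz, ?_⟩
    simpa using hf.mapsTo_ball one_ne_zero z ε hyz

theorem Isometry.mem_chainBall_of_dist_lt {e : X → Y} (he : Isometry e) (hd : DenseRange e)
    {p a : X} {q z : Y} {ε δ : ℝ} {m : ℕ} (hp : dist (e p) q < δ) (hz : z ∈ chainBall q ε m)
    (ha : dist (e a) z < δ) : a ∈ chainBall p (ε + 2 * δ) m := by
  induction m generalizing z a with
  | zero =>
    rw [chainBall, mem_ball] at hz ⊢
    rw [← he.dist_eq]
    linarith [dist_triangle4 (e a) z q (e p), dist_comm q (e p)]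
  | succ m ih =>
    obtain ⟨w, hw, hzw⟩ := mem_iUnion₂.1 hz
    obtain ⟨a', ha'⟩ := hd.exists_dist_lt w (dist_nonneg.trans_lt hp)
    refine mem_iUnion₂.2 ⟨a', ih hw (by rwa [dist_comm]), ?_⟩
    rw [mem_ball, ← he.dist_eq]
    linarith [dist_triangle4 (e a) z w (e a'), mem_ball.1 hzw]

theorem LipschitzWith.bourbakiCauchySeq_comp {f : X → Y} (hf : LipschitzWith 1 f) {u : ℕ → X}
    (hu : BourbakiCauchySeq u) : BourbakiCauchySeq (f ∘ u) := fun ε hε =>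
  let ⟨m, n₀, p, hp⟩ := hu ε hε
  ⟨m, n₀, f p, fun n hn => hf.mapsTo_chainBall p ε m (hp n hn)⟩

theorem BourbakiCauchySeq.isBourbakiBounded_range {u : ℕ → X} (hu : BourbakiCauchySeq u) :
    IsBourbakiBounded (range u) := by
  classical
  intro ε hε
  obtain ⟨m, n₀, p, hp⟩ := hu ε hε
  refine ⟨m, insert p ((Finset.range n₀).image u), ?_⟩
  rintro _ ⟨n, rfl⟩
  rcases lt_or_ge n n₀ with h | h
  · exact mem_biUnion (Finset.mem_insert_of_mem (Finset.mem_image_of_mem u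
      (Finset.mem_range.2 h))) (mem_chainBall_self hε m)
  · exact mem_biUnion (Finset.mem_insert_self _ _) (hp n h)

theorem DenseRange.exists_seq_tendsto_dist_zero {Z : Type*} {e : Z → Y} (hd : DenseRange e)
    (w : ℕ → Y) : ∃ v : ℕ → Z, Tendsto (fun n => dist (e (v n)) (w n)) atTop (𝓝 0) := by
  choose v hv using fun n : ℕ => hd.exists_dist_lt (w n) (Nat.one_div_pos_of_nat (n := n))
  exact ⟨v, squeeze_zero (fun _ => dist_nonneg) (fun n => (dist_comm _ _).trans_le (hv n).le)
    tendsto_one_div_add_atTop_nhds_zero_nat⟩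

theorem Isometry.bourbakiCauchySeq_of_tendsto_dist {e : X → Y} (he : Isometry e)
    (hd : DenseRange e) {w : ℕ → Y} (hw : BourbakiCauchySeq w) {v : ℕ → X}
    (hvw : Tendsto (fun n => dist (e (v n)) (w n)) atTop (𝓝 0)) : BourbakiCauchySeq v := by
  intro ε hε
  obtain ⟨m, n₀, q, hq⟩ := hw (ε / 3) (by positivity)
  obtain ⟨p, hp⟩ := hd.exists_dist_lt q (by positivity : 0 < ε / 3)
  obtain ⟨n₁, hn₁⟩ :=
    eventually_atTop.1 (hvw.eventually (gt_mem_nhds (by positivity : (0 : ℝ) < ε / 3)))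
  rw [dist_comm] at hp
  refine ⟨m, max n₀ n₁, p, fun n hn =>
    chainBall_mono_radius (ε := ε / 3 + 2 * (ε / 3)) (by linarith) m ?_⟩
  exact he.mem_chainBall_of_dist_lt hd hp (hq n (le_of_max_le_left hn))
    (hn₁ n (le_of_max_le_right hn))

theorem IsBourbakiBounded.exists_chainBall_eventually_mem {B : Set X} (hB : IsBourbakiBounded B)
    {ι : Type*} {u : ι → X} (hu : ∀ i, u i ∈ B) (U : Ultrafilter ι) {ε : ℝ} (hε : 0 < ε) :
    ∃ m p, ∀ᶠ i in U, u i ∈ chainBall p ε m := by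
  obtain ⟨m, s, hs⟩ := hB ε hε
  have hcover : ∀ᶠ i in U, ∃ p ∈ (s : Set X), u i ∈ chainBall p ε m :=
    Eventually.of_forall fun i => by simpa using hs (hu i)
  obtain ⟨p, -, hp⟩ := (Ultrafilter.eventually_exists_mem_iff s.finite_toSet).1 hcover
  exact ⟨m, p, hp⟩

theorem IsBourbakiBounded.exists_strictMono_bourbakiCauchySeq {B : Set X}
    (hB : IsBourbakiBounded B) {u : ℕ → X} (hu : ∀ n, u n ∈ B) :
    ∃ φ : ℕ → ℕ, StrictMono φ ∧ BourbakiCauchySeq (u ∘ φ) := by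
  let U := Ultrafilter.of (atTop : Filter ℕ)
  choose m p hp using fun k : ℕ =>
    hB.exists_chainBall_eventually_mem hu U (Nat.one_div_pos_of_nat (n := k))
  obtain ⟨φ, hφ, hφp⟩ := extraction_forall_of_frequently fun n =>
    ((finite_Iic n).eventually_all.2 fun k _ => hp k).frequently.filter_mono (Ultrafilter.of_le _)
  refine ⟨φ, hφ, fun ε hε => ?_⟩
  obtain ⟨k, hk⟩ := exists_nat_one_div_lt hε
  exact ⟨m k, k, p k, fun n hn => chainBall_mono_radius hk.le _ (hφp n k hn)⟩

theorem Isometry.totallyBounded_of_forall_exists_mapClusterPt {e : X → Y} (he : Isometry e)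
    {s : Set X} (h : ∀ u : ℕ → X, (∀ n, u n ∈ s) → ∃ y, MapClusterPt y atTop (e ∘ u)) :
    TotallyBounded s := by
  by_contra hs
  obtain ⟨ε, hε, hsep⟩ : ∃ ε > 0, ∀ t : Set X, t.Finite → ∃ x ∈ s, ∀ y ∈ t, ε ≤ dist x y := by
    simpa [Metric.totallyBounded_iff, not_subset] using hs
  obtain ⟨u, hu⟩ := seq_of_forall_finite_exists hsep
  obtain ⟨y, hy⟩ := h u fun n => (hu n).1
  have hnear := mapClusterPt_iff_frequently.1 hy _ (ball_mem_nhds y (half_pos hε))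
  obtain ⟨n₁, -, h₁⟩ := frequently_atTop.1 hnear 0
  obtain ⟨n₂, h₁₂, h₂⟩ := frequently_atTop.1 hnear (n₁ + 1)
  have hfar := (hu n₂).2 (u n₁) (mem_image_of_mem u (by simpa using h₁₂ : n₁ < n₂))
  rw [← he.dist_eq] at hfar
  simp only [Function.comp_apply, mem_ball] at h₁ h₂
  linarith [dist_triangle_right (e (u n₂)) (e (u n₁)) y]

theorem exists_mapClusterPt_of_totallyBounded_range {Z : Type*} [UniformSpace Z] [CompleteSpace Z]
    {ι : Type*} {l : Filter ι} [NeBot l] {f : ι → Z} (hf : TotallyBounded (range f)) :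
    ∃ z, MapClusterPt z l f := by
  obtain ⟨z, -, hz⟩ := (hf.closure.isCompact_of_isClosed isClosed_closure).exists_mapClusterPt
    (f := l) (tendsto_principal.2 (Eventually.of_forall fun i => subset_closure (mem_range_self i)))
  exact ⟨z, hz⟩

theorem MapClusterPt.of_tendsto_dist {ι : Type*} {l : Filter ι} {f g : ι → Y} {y : Y}
    (hf : MapClusterPt y l f) (hfg : Tendsto (fun i => dist (f i) (g i)) l (𝓝 0)) :
    MapClusterPt y l g := by
  rw [mapClusterPt_iff_frequently] at hf ⊢
  intro s hs
  obtain ⟨ε, hε, hball⟩ := Metric.mem_nhds_iff.1 hs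
  refine ((hf _ (ball_mem_nhds y (half_pos hε))).and_eventually
    (hfg.eventually (gt_mem_nhds (half_pos hε)))).mono fun i ⟨h₁, h₂⟩ => hball ?_
  rw [mem_ball] at h₁ ⊢
  linarith [dist_triangle (g i) (f i) y, dist_comm (g i) (f i)]

theorem Isometry.totallyBounded_of_isBourbakiComplete {e : X → Y} (he : Isometry e)
    (hY : IsBourbakiComplete Y) {B : Set X} (hB : IsBourbakiBounded B) : TotallyBounded B :=
  he.totallyBounded_of_forall_exists_mapClusterPt fun _ hu =>
    let ⟨_, hφ, huφ⟩ := hB.exists_strictMono_bourbakiCauchySeq hu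
    let ⟨y, hy⟩ := hY _ (he.lipschitz.bourbakiCauchySeq_comp huφ)
    ⟨y, hy.of_comp hφ.tendsto_atTop⟩

theorem Isometry.isBourbakiComplete_of_totallyBounded [CompleteSpace Y] {e : X → Y}
    (he : Isometry e) (hd : DenseRange e)
    (h : ∀ B : Set X, IsBourbakiBounded B → TotallyBounded B) : IsBourbakiComplete Y := by
  intro w hw
  obtain ⟨v, hv⟩ := hd.exists_seq_tendsto_dist_zero w
  have hvB := he.bourbakiCauchySeq_of_tendsto_dist hd hw hv
  have hTB : TotallyBounded (range (e ∘ v)) := by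
    rw [range_comp]
    exact (h _ hvB.isBourbakiBounded_range).image he.uniformContinuous
  obtain ⟨y, hy⟩ := exists_mapClusterPt_of_totallyBounded_range (l := atTop) hTB
  exact ⟨y, hy.of_tendsto_dist hv⟩

end BourbakiCompleteness

/-- The completion of a metric space is Bourbaki-complete iff every Bourbaki-bounded
subset of the space is totally bounded. -/
theorem completion_bourbakiComplete_iff_tb (X : Type*) [MetricSpace X] :
    IsBourbakiComplete (UniformSpace.Completion X) ↔
      ∀ B : Set X, IsBourbakiBounded B → TotallyBounded B :=
  ⟨fun h _ hB => UniformSpace.Completion.coe_isometry.totallyBounded_of_isBourbakiComplete h hB,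
    UniformSpace.Completion.coe_isometry.isBourbakiComplete_of_totallyBounded
      UniformSpace.Completion.denseRange_coe⟩
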